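/- For every k ≥ 3, the matrix H_k = I + ∑_{i=0}^{k−3} (−1)^{i+1} M_i (I + B (k−i) k) M_iᵀ is symmetric positive definite, where M_i = ∏_{j=0}^{i} t_{k−j}ᵀ (I + B (k−j) k)⁻¹ (the product over j taken in increasing order of j, the factor for j = 0 leftmost). -/

import Mathlib

open Matrix

variable {n : ℕ}

lemma aux_symm_eq {X : Matrix (Fin n) (Fin n) ℝ} (h : X.IsHermitian) : Xᵀ = X := by
  rw [← conjTranspose_eq_transpose_of_trivial]; exact h

lemma aux_conjPSD (C : Matrix (Fin n) (Fin n) ℝ) {X : Matrix (Fin n) (Fin n) ℝ}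
    (h : X.PosSemidef) : (C * X * Cᵀ).PosSemidef := by
  rw [← conjTranspose_eq_transpose_of_trivial]
  exact h.mul_mul_conjTranspose_same C

lemma aux_conjPD {C X : Matrix (Fin n) (Fin n) ℝ} (hX : X.PosDef) (hC : IsUnit C.det) :
    (C * X * Cᵀ).PosDef := by
  refine PosDef.of_dotProduct_mulVec_pos (aux_conjPSD C hX.posSemidef).isHermitian fun v hv => ?_
  have hCt : IsUnit (Cᵀ) := (Matrix.isUnit_iff_isUnit_det _).mpr (by rwa [det_transpose])
  have hy : Cᵀ *ᵥ v ≠ 0 := by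
    intro h
    exact hv (Matrix.mulVec_injective_iff_isUnit.mpr hCt (by simpa using h))
  have hsv : star v = v := funext fun i => star_trivial _
  have hsy : star (Cᵀ *ᵥ v) = Cᵀ *ᵥ v := funext fun i => star_trivial _
  have := hX.dotProduct_mulVec_pos hy
  rw [hsy] at this
  calc 0 < (Cᵀ *ᵥ v) ⬝ᵥ (X *ᵥ (Cᵀ *ᵥ v)) := this
  _ = star v ⬝ᵥ ((C * X * Cᵀ) *ᵥ v) := by
      rw [hsv, mulVec_mulVec, Matrix.mul_assoc]
      conv_rhs => rw [← mulVec_mulVec v C (X * Cᵀ), dotProduct_mulVec, ← mulVec_transpose]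

lemma aux_key {s G : Matrix (Fin n) (Fin n) ℝ} (hG : G.PosDef) :
    (G - sᵀ * (1 + s * G⁻¹ * sᵀ)⁻¹ * s).PosDef := by
  have hGdet : IsUnit G.det := hG.det_pos.ne'.isUnit
  have hsts : (sᵀ * s).PosSemidef := by
    have := posSemidef_conjTranspose_mul_self s
    rwa [conjTranspose_eq_transpose_of_trivial] at this
  set F : Matrix (Fin n) (Fin n) ℝ := G + sᵀ * s with hF
  set E : Matrix (Fin n) (Fin n) ℝ := 1 + s * G⁻¹ * sᵀ with hE
  have hFpd : F.PosDef := hG.add_posSemidef hsts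
  have hEpd : E.PosDef := Matrix.PosDef.one.add_posSemidef (aux_conjPSD s hG.inv.posSemidef)
  have hFdet : IsUnit F.det := hFpd.det_pos.ne'.isUnit
  have hEdet : IsUnit E.det := hEpd.det_pos.ne'.isUnit
  have hEs : E * s = s * G⁻¹ * F := by
    rw [hE, hF, Matrix.add_mul, Matrix.mul_add, Matrix.one_mul,
      Matrix.mul_assoc s G⁻¹ G, Matrix.nonsing_inv_mul G hGdet, Matrix.mul_one]
    noncomm_ring
  have h2 : s = E⁻¹ * (s * G⁻¹ * F) := by
    rw [← hEs, ← Matrix.mul_assoc, Matrix.nonsing_inv_mul E hEdet, Matrix.one_mul]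
  have h3 : s * F⁻¹ = E⁻¹ * s * G⁻¹ := by
    calc s * F⁻¹ = E⁻¹ * (s * G⁻¹ * F) * F⁻¹ := by rw [← h2]
    _ = E⁻¹ * s * G⁻¹ * (F * F⁻¹) := by noncomm_ring
    _ = E⁻¹ * s * G⁻¹ := by rw [Matrix.mul_nonsing_inv F hFdet, Matrix.mul_one]
  have h4 : E⁻¹ * s = s * F⁻¹ * G := by
    calc E⁻¹ * s = E⁻¹ * s * (G⁻¹ * G) := by
          rw [Matrix.nonsing_inv_mul G hGdet, Matrix.mul_one]
    _ = (E⁻¹ * s * G⁻¹) * G := by noncomm_ring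
    _ = s * F⁻¹ * G := by rw [← h3]
  have h5 : G - sᵀ * E⁻¹ * s = G * F⁻¹ * G := by
    rw [Matrix.mul_assoc sᵀ E⁻¹ s, h4]
    calc G - sᵀ * (s * F⁻¹ * G) = (F - sᵀ * s) * F⁻¹ * G := by
          rw [Matrix.sub_mul, Matrix.sub_mul, Matrix.mul_nonsing_inv F hFdet, Matrix.one_mul]
          noncomm_ring
    _ = G * F⁻¹ * G := by rw [add_sub_cancel_right]
  rw [h5]
  have := aux_conjPD (C := G) hFpd.inv hGdet
  rwa [aux_symm_eq hG.isHermitian] at this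

/-- `A_i = 1 + B (k-i) k`. -/
noncomputable def Amat (n : ℕ) (B : ℕ → ℕ → Matrix (Fin n) (Fin n) ℝ) (k i : ℕ) :
    Matrix (Fin n) (Fin n) ℝ := 1 + B (k-i) k

/-- `c_i = t_{k-i}ᵀ A_i⁻¹`. -/
noncomputable def cmat (n : ℕ) (t : ℕ → Matrix (Fin n) (Fin n) ℝ)
    (B : ℕ → ℕ → Matrix (Fin n) (Fin n) ℝ) (k i : ℕ) : Matrix (Fin n) (Fin n) ℝ :=
  (t (k-i))ᵀ * (Amat n B k i)⁻¹

/-- `D_i = c_i t_{k-i}`. -/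
noncomputable def Dmat (n : ℕ) (t : ℕ → Matrix (Fin n) (Fin n) ℝ)
    (B : ℕ → ℕ → Matrix (Fin n) (Fin n) ℝ) (k i : ℕ) : Matrix (Fin n) (Fin n) ℝ :=
  cmat n t B k i * t (k-i)

noncomputable def Pm (n : ℕ) (t : ℕ → Matrix (Fin n) (Fin n) ℝ)
    (B : ℕ → ℕ → Matrix (Fin n) (Fin n) ℝ) (k i j : ℕ) : Matrix (Fin n) (Fin n) ℝ :=
  (((List.range j).map (fun l => cmat n t B k (i+l))).prod)

noncomputable def Rm (n : ℕ) (t : ℕ → Matrix (Fin n) (Fin n) ℝ)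
    (B : ℕ → ℕ → Matrix (Fin n) (Fin n) ℝ) (k i : ℕ) : Matrix (Fin n) (Fin n) ℝ :=
  ∑ j ∈ Finset.range (k-2-i),
    (-1:ℝ)^j • (Pm n t B k i j * Dmat n t B k (i+j) * (Pm n t B k i j)ᵀ)

/-- `M_i = ∏_{j=0}^{i} t_{k−j}ᵀ (I + B (k−j) k)⁻¹` (ordered product, `j = 0` leftmost). -/
noncomputable def Mprod (n : ℕ) (t : ℕ → Matrix (Fin n) (Fin n) ℝ)
    (B : ℕ → ℕ → Matrix (Fin n) (Fin n) ℝ) (k i : ℕ) : Matrix (Fin n) (Fin n) ℝ :=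
  (((List.range (i+1)).map (fun j => (t (k-j))ᵀ * (1 + B (k-j) k)⁻¹)).prod)

/-- `H_k = I + ∑_{i=0}^{k−3} (−1)^{i+1} M_i (I + B (k−i) k) M_iᵀ`. -/
noncomputable def Hmat (n : ℕ) (t : ℕ → Matrix (Fin n) (Fin n) ℝ)
    (B : ℕ → ℕ → Matrix (Fin n) (Fin n) ℝ) (k : ℕ) : Matrix (Fin n) (Fin n) ℝ :=
  1 + ∑ i ∈ Finset.range (k-2),
    (-1 : ℝ) ^ (i+1) • (Mprod n t B k i * (1 + B (k-i) k) * (Mprod n t B k i)ᵀ)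

/-- For every `k ≥ 3`, the matrix `H_k` is symmetric positive definite. -/
theorem Hmat_posDef
    (n : ℕ) (hn : 1 ≤ n)
    (t : ℕ → Matrix (Fin n) (Fin n) ℝ)
    (ht_lower : ∀ j, 1 ≤ j → ∀ i k : Fin n, i < k → t j i k = 0)
    (ht_diag : ∀ j, 1 ≤ j → ∀ i : Fin n, 0 < t j i i)
    (x : ℕ → Matrix (Fin n) (Fin n) ℝ)
    (hx : ∀ j, 1 ≤ j → x j = t j * (t j)ᵀ)
    (B : ℕ → ℕ → Matrix (Fin n) (Fin n) ℝ)
    (hB_diag : ∀ k, 1 ≤ k → B k k = x k)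
    (hB_rec : ∀ j k, 1 ≤ j → j < k → B j k = t j * (1 + B (j+1) k)⁻¹ * (t j)ᵀ) :
    ∀ k, 3 ≤ k → (Hmat n t B k).PosDef := by
  intro k hk
  classical
  -- the Cholesky factors are invertible
  have hdet : ∀ j, 1 ≤ j → IsUnit (t j).det := by
    intro j hj
    have hbt : (t j).BlockTriangular OrderDual.toDual := by
      intro a b hab
      exact ht_lower j hj a b hab
    rw [Matrix.det_of_lowerTriangular (t j) hbt]
    exact (Finset.prod_pos (fun i _ => ht_diag j hj i)).ne'.isUnit
  -- positive definiteness of the brackets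
  have hB : ∀ d j, j + d = k → 1 ≤ j → (B j k).PosDef := by
    intro d
    induction d with
    | zero =>
      intro j hjk hj
      have hjeq : j = k := by omega
      subst hjeq
      rw [hB_diag j hj, hx j hj]
      have := aux_conjPD (C := t j)
        (Matrix.PosDef.one : (1 : Matrix (Fin n) (Fin n) ℝ).PosDef) (hdet j hj)
      simpa using this
    | succ d ih =>
      intro j hjk hj
      have hjk' : j < k := by omega
      rw [hB_rec j k hj hjk']
      have h1 : (B (j+1) k).PosDef := ih (j+1) (by omega) (by omega)
      exact aux_conjPD (Matrix.PosDef.one.add_posSemidef h1.posSemidef).inv (hdet j hj)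
  have hA : ∀ i, i ≤ k - 1 → (Amat n B k i).PosDef := by
    intro i hi
    have := hB i (k-i) (by omega) (by omega)
    exact Matrix.PosDef.one.add_posSemidef this.posSemidef
  have hAdet : ∀ i, i ≤ k - 1 → IsUnit (Amat n B k i).det :=
    fun i hi => ((hA i hi).det_pos).ne'.isUnit
  have hcT : ∀ i, i ≤ k - 1 → (cmat n t B k i)ᵀ = (Amat n B k i)⁻¹ * t (k-i) := by
    intro i hi
    rw [cmat, transpose_mul, transpose_transpose, aux_symm_eq (hA i hi).inv.isHermitian]
  have hDc : ∀ i, i ≤ k - 1 →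
      Dmat n t B k i = cmat n t B k i * Amat n B k i * (cmat n t B k i)ᵀ := by
    intro i hi
    have h1 : Amat n B k i * ((Amat n B k i)⁻¹ * t (k-i)) = t (k-i) := by
      rw [← Matrix.mul_assoc, Matrix.mul_nonsing_inv _ (hAdet i hi), Matrix.one_mul]
    rw [hcT i hi, Matrix.mul_assoc, h1, Dmat]
  have hAD : ∀ i, i + 1 ≤ k - 1 → (Amat n B k i - Dmat n t B k (i+1)).PosDef := by
    intro i hi
    have e1 : Amat n B k (i+1) = 1 + t (k-(i+1)) * (Amat n B k i)⁻¹ * (t (k-(i+1)))ᵀ := by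
      rw [Amat, Amat, hB_rec (k-(i+1)) k (by omega) (by omega)]
      have : k - (i+1) + 1 = k - i := by omega
      rw [this]
    have hkey := aux_key (s := t (k-(i+1))) (hA i (by omega))
    rw [← e1] at hkey
    simpa [Dmat, cmat] using hkey
  have hPfront : ∀ i j, Pm n t B k i (j+1) = cmat n t B k i * Pm n t B k (i+1) j := by
    intro i j
    rw [Pm, Pm, List.range_succ_eq_map, List.map_cons, List.prod_cons, List.map_map]
    have h0 : i + 0 = i := rfl
    have hs : (fun l => cmat n t B k (i + l)) ∘ Nat.succ
        = fun l => cmat n t B k (i + 1 + l) := by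
      funext l
      simp only [Function.comp_apply]
      have h : i + Nat.succ l = i + 1 + l := by omega
      rw [h]
    rw [h0, hs]
  have hPback : ∀ i j, Pm n t B k i (j+1) = Pm n t B k i j * cmat n t B k (i+j) := by
    intro i j
    rw [Pm, Pm, List.range_succ, List.map_append, List.prod_append]
    simp
  have hM : ∀ i, Mprod n t B k i = Pm n t B k 0 i * cmat n t B k i := by
    intro i
    have h1 : Mprod n t B k i = Pm n t B k 0 (i+1) := by
      rw [Mprod, Pm]
      congr 1
      apply List.map_congr_left
      intro l _
      simp [cmat, Amat]
    rw [h1, hPback]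
    simp
  have hRrec : ∀ i, i + 1 < k - 2 → Rm n t B k i
      = Dmat n t B k i - cmat n t B k i * Rm n t B k (i+1) * (cmat n t B k i)ᵀ := by
    intro i hi
    have hm : k - 2 - i = (k - 2 - (i+1)) + 1 := by omega
    rw [Rm, hm, Finset.sum_range_succ']
    have hP0 : Pm n t B k i 0 = 1 := by simp [Pm]
    have hsum : ∑ j ∈ Finset.range (k-2-(i+1)),
        (-1:ℝ)^(j+1) • (Pm n t B k i (j+1) * Dmat n t B k (i+(j+1)) * (Pm n t B k i (j+1))ᵀ)
        = - (cmat n t B k i * Rm n t B k (i+1) * (cmat n t B k i)ᵀ) := by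
      rw [Rm, Finset.mul_sum, Finset.sum_mul, ← Finset.sum_neg_distrib]
      apply Finset.sum_congr rfl
      intro j hj
      rw [hPfront]
      have hidx : i + (j+1) = (i+1) + j := by omega
      rw [hidx, transpose_mul]
      have hpow : ((-1:ℝ))^(j+1) = -(-1:ℝ)^j := by ring
      rw [hpow, neg_smul, mul_smul_comm, smul_mul_assoc, neg_inj]
      congr 1
      noncomm_ring
    rw [hsum]
    simp [hP0]
    abel
  have hInv : ∀ m i, i + m + 1 = k - 2 →
      (Rm n t B k i).PosSemidef ∧ (Dmat n t B k i - Rm n t B k i).PosSemidef := by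
    intro m
    induction m with
    | zero =>
      intro i hi
      have hR : Rm n t B k i = Dmat n t B k i := by
        rw [Rm, show k - 2 - i = 1 from by omega]
        simp [Pm]
      refine ⟨?_, ?_⟩
      · rw [hR, hDc i (by omega)]
        exact aux_conjPSD _ (hA i (by omega)).posSemidef
      · rw [hR, sub_self]
        exact Matrix.PosSemidef.zero
    | succ m ih =>
      intro i hi
      obtain ⟨h1, h2⟩ := ih (i+1) (by omega)
      have hrec := hRrec i (by omega)
      have hiu : i ≤ k - 1 := by omega
      have hAR : (Amat n B k i - Rm n t B k (i+1)).PosSemidef := by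
        have hadd := ((hAD i (by omega)).posSemidef).add h2
        have e : (Amat n B k i - Dmat n t B k (i+1))
            + (Dmat n t B k (i+1) - Rm n t B k (i+1))
            = Amat n B k i - Rm n t B k (i+1) := by abel
        rwa [e] at hadd
      refine ⟨?_, ?_⟩
      · have e : Rm n t B k i
            = cmat n t B k i * (Amat n B k i - Rm n t B k (i+1)) * (cmat n t B k i)ᵀ := by
          rw [hrec, hDc i hiu, Matrix.mul_sub, Matrix.sub_mul]
        rw [e]
        exact aux_conjPSD _ hAR
      · rw [hrec, sub_sub_cancel]
        exact aux_conjPSD _ h1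
  obtain ⟨hR0, hDR0⟩ := hInv (k-3) 0 (by omega)
  have h1D : ((1 : Matrix (Fin n) (Fin n) ℝ) - Dmat n t B k 0).PosDef := by
    have hkey := aux_key (s := t k)
      (Matrix.PosDef.one : (1 : Matrix (Fin n) (Fin n) ℝ).PosDef)
    have e : (1 : Matrix (Fin n) (Fin n) ℝ) + t k * (1 : Matrix (Fin n) (Fin n) ℝ)⁻¹ * (t k)ᵀ
        = Amat n B k 0 := by
      rw [inv_one, Matrix.mul_one, Amat, Nat.sub_zero, hB_diag k (by omega),
        hx k (by omega)]
    rw [e] at hkey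
    simpa [Dmat, cmat] using hkey
  have hHeq : Hmat n t B k = ((1 : Matrix (Fin n) (Fin n) ℝ) - Dmat n t B k 0)
      + (Dmat n t B k 0 - Rm n t B k 0) := by
    rw [sub_add_sub_cancel, Hmat, Rm, Nat.sub_zero, sub_eq_add_neg, ← Finset.sum_neg_distrib]
    congr 1
    apply Finset.sum_congr rfl
    intro i hi2
    have hi3 : i ≤ k - 1 := by
      have := Finset.mem_range.mp hi2
      omega
    rw [hM i, transpose_mul, Nat.zero_add, show ((-1:ℝ))^(i+1) = -(-1:ℝ)^i from by ring,
      neg_smul, ← neg_smul, neg_smul, neg_inj]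
    congr 1
    rw [hDc i hi3, show (1 + B (k-i) k) = Amat n B k i from rfl]
    noncomm_ring
  rw [hHeq]
  exact h1D.add_posSemidef hDR0
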